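/- arXiv:2410.17982 — 6 statements merged into one kernel-verified Lean document; each statement's English description precedes it below -/
import Mathlib

section
/- Let V be a finite-dimensional normed vector space over ℚ_p and let α₁,…,αₙ be a basis with ‖α₁‖ = ‖α₂‖ = ⋯ = ‖αₙ‖ = λ. Then α₁,…,αₙ is an orthogonal basis if and only if: for all a₁,…,aₙ ∈ ℤ_p, the inequality ‖∑ aᵢαᵢ‖ < λ implies p ∣ aᵢ for every i. -/
/-- A basis with all vectors of the same norm λ is orthogonal iff every
ℤ_p-linear combination of norm < λ has all coefficients divisible by p. -/
theorem stmt1 {p : ℕ} [Fact p.Prime] {V : Type*} [NormedAddCommGroup V]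
    [NormedSpace ℚ_[p] V]
    (hna : ∀ v w : V, ‖v + w‖ ≤ max ‖v‖ ‖w‖)
    {n : ℕ} (hn : 0 < n) (b : Module.Basis (Fin n) ℚ_[p] V)
    (lam : ℝ) (hb : ∀ i, ‖b i‖ = lam) :
    (∀ a : Fin n → ℚ_[p],
        ‖∑ i, a i • b i‖₊ = Finset.univ.sup fun i => ‖a i • b i‖₊) ↔
      (∀ a : Fin n → ℤ_[p], ‖∑ i, (a i : ℚ_[p]) • b i‖ < lam →
        ∀ i, (p : ℤ_[p]) ∣ a i) := by
  have hud : IsUltrametricDist V :=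
    IsUltrametricDist.isUltrametricDist_of_forall_norm_add_le_max_norm hna
  have i0 : Fin n := ⟨0, hn⟩
  have hlam : 0 < lam := by
    rw [← hb i0]
    exact norm_pos_iff.mpr (b.ne_zero i0)
  constructor
  · intro H a ha i
    have h1 : ‖(a i : ℚ_[p]) • b i‖ ≤ ‖∑ j, (a j : ℚ_[p]) • b j‖ := by
      have := H fun j => (a j : ℚ_[p])
      have h2 : ‖(a i : ℚ_[p]) • b i‖₊ ≤
          Finset.univ.sup fun j => ‖(a j : ℚ_[p]) • b j‖₊ :=
        Finset.le_sup (f := fun j => ‖(a j : ℚ_[p]) • b j‖₊) (Finset.mem_univ i)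
      rw [← this] at h2
      exact_mod_cast h2
    have h3 : ‖(a i : ℚ_[p])‖ * lam < lam := by
      calc ‖(a i : ℚ_[p])‖ * lam = ‖(a i : ℚ_[p]) • b i‖ := by rw [norm_smul, hb i]
        _ ≤ ‖∑ j, (a j : ℚ_[p]) • b j‖ := h1
        _ < lam := ha
    have h4 : ‖a i‖ < 1 := by
      rw [PadicInt.norm_def]
      nlinarith [norm_nonneg (a i : ℚ_[p])]
    exact (PadicInt.norm_lt_one_iff_dvd (a i)).mp h4
  · intro H a
    refine le_antisymm (Finset.nnnorm_sum_le_sup_nnnorm _ _) ?_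
    by_contra hlt
    push_neg at hlt
    obtain ⟨i0', -, hi0⟩ := Finset.exists_mem_eq_sup Finset.univ
      ⟨i0, Finset.mem_univ i0⟩ fun i => ‖a i • b i‖₊
    rw [hi0] at hlt
    have hsumlt : ‖∑ i, a i • b i‖ < ‖a i0' • b i0'‖ := hlt
    have hai0 : a i0' ≠ 0 := by
      intro h
      rw [h, zero_smul, norm_zero] at hsumlt
      exact absurd hsumlt (not_lt.mpr (norm_nonneg _))
    have hmax : ∀ j, ‖a j‖ ≤ ‖a i0'‖ := by
      intro j
      have : ‖a j • b j‖₊ ≤ ‖a i0' • b i0'‖₊ := by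
        rw [← hi0]; exact Finset.le_sup (f := fun i => ‖a i • b i‖₊) (Finset.mem_univ j)
      have h2 : ‖a j • b j‖ ≤ ‖a i0' • b i0'‖ := by exact_mod_cast this
      rw [norm_smul, norm_smul, hb j, hb i0'] at h2
      exact le_of_mul_le_mul_right h2 hlam
    set c : ℚ_[p] := (a i0')⁻¹ with hc
    have hc0 : c ≠ 0 := inv_ne_zero hai0
    have hint : ∀ j, ‖c * a j‖ ≤ 1 := by
      intro j
      rw [norm_mul, norm_inv]
      calc ‖a i0'‖⁻¹ * ‖a j‖ ≤ ‖a i0'‖⁻¹ * ‖a i0'‖ := by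
            apply mul_le_mul_of_nonneg_left (hmax j)
            positivity
        _ = 1 := inv_mul_cancel₀ (norm_ne_zero_iff.mpr hai0)
    set a' : Fin n → ℤ_[p] := fun j => ⟨c * a j, hint j⟩ with ha'
    have hsum : ∑ j, (a' j : ℚ_[p]) • b j = c • ∑ j, a j • b j := by
      rw [Finset.smul_sum]
      exact Finset.sum_congr rfl fun j _ => by rw [smul_smul]
    have hlt2 : ‖∑ j, (a' j : ℚ_[p]) • b j‖ < lam := by
      rw [hsum, norm_smul]
      calc ‖c‖ * ‖∑ j, a j • b j‖ < ‖c‖ * ‖a i0' • b i0'‖ :=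
            mul_lt_mul_of_pos_left hsumlt (norm_pos_iff.mpr hc0)
        _ = lam := by
            rw [norm_smul, hb i0', hc, norm_inv, ← mul_assoc,
              inv_mul_cancel₀ (norm_ne_zero_iff.mpr hai0), one_mul]
    have := H a' hlt2 i0'
    have h5 : ‖a' i0'‖ < 1 := (PadicInt.norm_lt_one_iff_dvd _).mpr this
    have h6 : ‖a' i0'‖ = 1 := by
      rw [PadicInt.norm_def]
      show ‖c * a i0'‖ = 1
      rw [hc, norm_mul, norm_inv, inv_mul_cancel₀ (norm_ne_zero_iff.mpr hai0)]
    rw [h6] at h5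
    exact lt_irrefl 1 h5
end

section
/- Let K be a finite extension of ℚ_p with valuation ring R, maximal ideal P, residue field k = R/P, and uniformizer π. Let V ⊆ K be a ℚ_p-subspace with basis α₁,…,α_m such that |α₁| = ⋯ = |α_m| = |π^s| for some integer s. Then α₁,…,α_m is an orthogonal basis of V over ℚ_p if and only if the images of π^{-s}α₁,…,π^{-s}α_m in k are linearly independent over 𝔽_p. -/
theorem int_approx {p : ℕ} [Fact p.Prime] (b : ℚ_[p]) (hb : ‖b‖ ≤ 1) :
    ∃ c : ℤ, ‖b - (c : ℚ_[p])‖ < 1 := by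
  set z : ℤ_[p] := ⟨b, hb⟩
  refine ⟨(PadicInt.appr z 1 : ℤ), ?_⟩
  have h := PadicInt.appr_spec 1 z
  rw [Ideal.mem_span_singleton] at h
  obtain ⟨y, hy⟩ := h
  have hp1 : (1 : ℝ) < p := by exact_mod_cast (Fact.out : p.Prime).one_lt
  have : ‖z - ((PadicInt.appr z 1 : ℕ) : ℤ_[p])‖ < 1 := by
    rw [hy]
    calc ‖(p:ℤ_[p])^1 * y‖ ≤ ‖(p:ℤ_[p])^1‖ * ‖y‖ := norm_mul_le _ _
      _ ≤ (p:ℝ)⁻¹ * 1 := by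
          rw [pow_one, PadicInt.norm_p]; gcongr; exact y.norm_le_one
      _ < 1 := by rw [mul_one]; exact inv_lt_one_of_one_lt₀ hp1
  have hb' : b = (z : ℚ_[p]) := rfl
  rw [hb']
  push_cast at this ⊢
  exact_mod_cast this

theorem na_sum_le {K : Type*} [NormedField K] (hna : ∀ x y : K, ‖x + y‖ ≤ max ‖x‖ ‖y‖)
    {ι : Type*} (t : Finset ι) (f : ι → K) (B : ℝ) (hB : 0 ≤ B)
    (h : ∀ i ∈ t, ‖f i‖ ≤ B) : ‖∑ i ∈ t, f i‖ ≤ B := by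
  induction t using Finset.cons_induction with
  | empty => simpa using hB
  | cons a t ha ih =>
      rw [Finset.sum_cons]
      refine le_trans (hna _ _) (max_le (h a (Finset.mem_cons_self a t)) ?_)
      exact ih fun i hi => h i (Finset.mem_cons_of_mem hi)

theorem na_sum_sup {K : Type*} [NormedField K] (hna : ∀ x y : K, ‖x + y‖ ≤ max ‖x‖ ‖y‖)
    {ι : Type*} (t : Finset ι) (f : ι → K) :
    ‖∑ i ∈ t, f i‖₊ ≤ t.sup fun i => ‖f i‖₊ := by
  induction t using Finset.cons_induction with
  | empty => simp
  | cons a t ha ih =>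
      rw [Finset.sum_cons, Finset.sup_cons]
      have h1 : ‖f a + ∑ i ∈ t, f i‖₊ ≤ ‖f a‖₊ ⊔ ‖∑ i ∈ t, f i‖₊ := by
        have := hna (f a) (∑ i ∈ t, f i)
        rw [← NNReal.coe_le_coe]; push_cast; exact this
      exact le_trans h1 (sup_le_sup_left ih _ |>.trans_eq rfl) |>.trans
        (sup_le (le_sup_left) (le_sup_right.trans (le_refl _)))

/-- In a finite extension K of ℚ_p with uniformizer π, a linearly independent
family α₁,…,α_m with all |αᵢ| = |π^s| is an orthogonal basis of its span iff the residues of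
π^{-s}αᵢ in k = R/P are linearly independent over 𝔽_p (expressed via integer lifts of
𝔽_p-coefficients: any ℤ-combination landing in the maximal ideal has all coefficients
divisible by p). -/
theorem stmt2 {p : ℕ} [Fact p.Prime] {K : Type*} [NormedField K] [NormedAlgebra ℚ_[p] K]
    [FiniteDimensional ℚ_[p] K]
    (hna : ∀ x y : K, ‖x + y‖ ≤ max ‖x‖ ‖y‖)
    (hext : ∀ x : ℚ_[p], ‖algebraMap ℚ_[p] K x‖ = ‖x‖)
    (π : K) (hπ0 : 0 < ‖π‖) (hπ1 : ‖π‖ < 1)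
    (hunif : ∀ x : K, x ≠ 0 → ∃ m : ℤ, ‖x‖ = ‖π‖ ^ m)
    {m : ℕ} (α : Fin m → K) (hlin : LinearIndependent ℚ_[p] α)
    (s : ℤ) (hα : ∀ i, ‖α i‖ = ‖π‖ ^ s) :
    (∀ a : Fin m → ℚ_[p],
        ‖∑ i, a i • α i‖₊ = Finset.univ.sup fun i => ‖a i • α i‖₊) ↔
      (∀ c : Fin m → ℤ, ‖∑ i, (c i : K) * (π ^ (-s) * α i)‖ < 1 →
        ∀ i, (p : ℤ) ∣ c i) := by
  have hπne : π ≠ 0 := fun h => by simp [h] at hπ0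
  have hπs : π ^ s * π ^ (-s) = 1 := by
    rw [← zpow_add₀ hπne]; simp
  have hπspos : (0:ℝ) < ‖π‖ ^ s := zpow_pos hπ0 s
  have hβ : ∀ i, ‖π ^ (-s) * α i‖ = 1 := by
    intro i
    rw [norm_mul, norm_zpow, hα i, zpow_neg, inv_mul_cancel₀ (ne_of_gt hπspos)]
  constructor
  · intro hO c hc i
    set a : Fin m → ℚ_[p] := fun j => (c j : ℚ_[p]) with ha
    have key : ∑ j, a j • α j = π ^ s * ∑ j, (c j : K) * (π ^ (-s) * α j) := by
      rw [Finset.mul_sum]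
      refine Finset.sum_congr rfl fun j _ => ?_
      rw [Algebra.smul_def, ha, map_intCast]
      calc (c j : K) * α j = (π ^ s * π ^ (-s)) * ((c j : K) * α j) := by rw [hπs, one_mul]
        _ = π ^ s * ((c j : K) * (π ^ (-s) * α j)) := by ring
    have hsum : ‖∑ j, a j • α j‖ < ‖π‖ ^ s := by
      rw [key, norm_mul, norm_zpow]
      calc ‖π‖ ^ s * ‖∑ j, (c j : K) * (π ^ (-s) * α j)‖ < ‖π‖ ^ s * 1 := by gcongr
        _ = ‖π‖ ^ s := mul_one _
    have hterm : ‖a i • α i‖ ≤ ‖∑ j, a j • α j‖ := by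
      have := hO a
      have h1 : ‖a i • α i‖₊ ≤ Finset.univ.sup fun j => ‖a j • α j‖₊ :=
        Finset.le_sup (f := fun j => ‖a j • α j‖₊) (Finset.mem_univ i)
      rw [← this] at h1
      exact_mod_cast h1
    have : ‖a i‖ * ‖π‖ ^ s < ‖π‖ ^ s := by
      calc ‖a i‖ * ‖π‖ ^ s = ‖a i • α i‖ := by rw [norm_smul, hα i]
        _ ≤ ‖∑ j, a j • α j‖ := hterm
        _ < ‖π‖ ^ s := hsum
    have hai : ‖a i‖ < 1 := by
      by_contra h
      push_neg at h
      nlinarith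
    rw [ha] at hai
    exact (Padic.norm_intCast_lt_one_iff (k := c i)).mp hai
  · intro hR a
    refine le_antisymm (na_sum_sup hna _ _) (Finset.sup_le fun i _ => ?_)
    -- choose i₀ maximizing ‖a j‖
    have hne : (Finset.univ : Finset (Fin m)).Nonempty := ⟨i, Finset.mem_univ i⟩
    obtain ⟨i₀, -, hi₀⟩ := Finset.exists_max_image Finset.univ (fun j => ‖a j‖) hne
    by_cases h0 : a i₀ = 0
    · have : a i = 0 := by
        have := hi₀ i (Finset.mem_univ i)
        rw [h0, norm_zero] at this
        exact norm_eq_zero.mp (le_antisymm this (norm_nonneg _))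
      simp [this]
    · set b : Fin m → ℚ_[p] := fun j => a j / a i₀ with hb
      have hble : ∀ j, ‖b j‖ ≤ 1 := by
        intro j
        rw [hb]
        simp only [norm_div]
        rw [div_le_one (norm_pos_iff.mpr h0)]
        exact hi₀ j (Finset.mem_univ j)
      set S : K := ∑ j, algebraMap ℚ_[p] K (b j) * (π ^ (-s) * α j) with hSdef
      have hkey : ∑ j, a j • α j = a i₀ • (π ^ s * S) := by
        rw [hSdef, Finset.mul_sum, Finset.smul_sum]
        refine Finset.sum_congr rfl fun j _ => ?_
        rw [Algebra.smul_def, Algebra.smul_def, hb]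
        have : algebraMap ℚ_[p] K (a j / a i₀) =
            algebraMap ℚ_[p] K (a j) / algebraMap ℚ_[p] K (a i₀) := map_div₀ _ _ _
        rw [this]
        have h0' : algebraMap ℚ_[p] K (a i₀) ≠ 0 := by
          intro h
          apply h0
          have := hext (a i₀)
          rw [h, norm_zero] at this
          exact norm_eq_zero.mp this.symm
        rw [div_eq_mul_inv]
        calc algebraMap ℚ_[p] K (a j) * α j
            = (algebraMap ℚ_[p] K (a i₀) * (algebraMap ℚ_[p] K (a i₀))⁻¹) *
              ((π ^ s * π ^ (-s)) * (algebraMap ℚ_[p] K (a j) * α j)) := by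
                rw [mul_inv_cancel₀ h0', hπs]; ring
          _ = algebraMap ℚ_[p] K (a i₀) *
              (π ^ s * (algebraMap ℚ_[p] K (a j) * (algebraMap ℚ_[p] K (a i₀))⁻¹ *
                (π ^ (-s) * α j))) := by ring
      have hSle : ‖S‖ ≤ 1 := by
        rw [hSdef]
        refine na_sum_le hna _ _ 1 zero_le_one fun j _ => ?_
        rw [norm_mul, hext, hβ j]
        simpa using hble j
      have hS1 : ‖S‖ = 1 := by
        rcases lt_or_eq_of_le hSle with hlt | heq
        · exfalso
          choose c hcc using fun j => int_approx (b j) (hble j)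
          have hT : ‖∑ j, (c j : K) * (π ^ (-s) * α j)‖ < 1 := by
            have hTeq : ∑ j, (c j : K) * (π ^ (-s) * α j) =
                S + ∑ j, algebraMap ℚ_[p] K (c j - b j) * (π ^ (-s) * α j) := by
              rw [hSdef, ← Finset.sum_add_distrib]
              refine Finset.sum_congr rfl fun j _ => ?_
              rw [← add_mul, ← map_add]
              congr 1
              rw [add_sub_cancel, map_intCast]
            rw [hTeq]
            refine lt_of_le_of_lt (hna _ _) (max_lt hlt ?_)
            set B : ℝ := Finset.univ.sup' hne fun j => ‖(c j : ℚ_[p]) - b j‖ with hBdef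
            have hB0 : 0 ≤ B := le_trans (norm_nonneg ((c i : ℚ_[p]) - b i))
              (Finset.le_sup' (fun j => ‖(c j : ℚ_[p]) - b j‖) (Finset.mem_univ i))
            have hB1 : B < 1 := by
              rw [hBdef, Finset.sup'_lt_iff]
              intro j _
              rw [norm_sub_rev]
              exact hcc j
            refine lt_of_le_of_lt
              (na_sum_le hna _ _ B hB0 fun j _ => ?_) hB1
            rw [norm_mul, hext, hβ j, mul_one]
            exact Finset.le_sup' (fun j => ‖(c j : ℚ_[p]) - b j‖) (Finset.mem_univ j)
          have := hR c hT i₀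
          have hc1 : ‖(c i₀ : ℚ_[p])‖ < 1 := (Padic.norm_intCast_lt_one_iff).mpr this
          have hbi₀ : b i₀ = 1 := by rw [hb]; exact div_self h0
          have : (1 : ℝ) ≤ max ‖b i₀ - (c i₀ : ℚ_[p])‖ ‖(c i₀ : ℚ_[p])‖ := by
            have h1 : (1:ℚ_[p]) = (b i₀ - (c i₀ : ℚ_[p])) + (c i₀ : ℚ_[p]) := by
              rw [hbi₀]; ring
            calc (1:ℝ) = ‖(1:ℚ_[p])‖ := by rw [norm_one]
              _ ≤ _ := by rw [h1]; exact Padic.nonarchimedean _ _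
          exact absurd this (not_le.mpr (max_lt (hcc i₀) hc1))
        · exact heq
      -- conclude
      have hnorm : ‖∑ j, a j • α j‖ = ‖a i₀‖ * ‖π‖ ^ s := by
        rw [hkey, norm_smul, norm_mul, norm_zpow, hS1, mul_one]
      have hgoal : ‖a i • α i‖ ≤ ‖∑ j, a j • α j‖ := by
        rw [hnorm, norm_smul, hα i]
        gcongr
        exact hi₀ i (Finset.mem_univ i)
      exact_mod_cast hgoal
end

section
/- Let K = ℚ_p(θ) be a finite extension of ℚ_p of degree n with |θ| = 1, and let F be the minimal polynomial of θ over ℚ_p. If F is reducible modulo p (i.e., the reduction of F mod p factors nontrivially over 𝔽_p), then 1, θ, θ², …, θ^{n-1} is not an orthogonal basis of K over ℚ_p. -/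
open IntermediateField Polynomial

/-- If K = ℚ_p(θ) has degree n, |θ| = 1, and the minimal polynomial F of θ
(with coefficients in ℤ_p) is reducible modulo p, then 1, θ, …, θ^{n-1} is not an
orthogonal basis of K over ℚ_p. -/
theorem stmt3 {p : ℕ} [Fact p.Prime] {K : Type*} [NormedField K] [NormedAlgebra ℚ_[p] K]
    [FiniteDimensional ℚ_[p] K]
    (hna : ∀ x y : K, ‖x + y‖ ≤ max ‖x‖ ‖y‖)
    (hext : ∀ x : ℚ_[p], ‖algebraMap ℚ_[p] K x‖ = ‖x‖)
    (θ : K) (hθ : ‖θ‖ = 1) (hgen : ℚ_[p]⟮θ⟯ = ⊤)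
    {n : ℕ} (hn : Module.finrank ℚ_[p] K = n)
    (F : Polynomial ℤ_[p]) (hFmonic : F.Monic)
    (hF : F.map (algebraMap ℤ_[p] ℚ_[p]) = minpoly ℚ_[p] θ)
    (hred : ¬ Irreducible (F.map (PadicInt.toZMod (p := p)))) :
    ¬ (∀ a : Fin n → ℚ_[p],
        ‖∑ i, a i • θ ^ (i : ℕ)‖₊ =
          Finset.univ.sup fun i => ‖a i • θ ^ (i : ℕ)‖₊) := by
  intro H
  have hppos : 1 < p := (Fact.out : p.Prime).one_lt
  haveI : NeZero p := ⟨(Fact.out : p.Prime).ne_zero⟩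
  have hn0 : 0 < n := hn ▸ Module.finrank_pos
  have hθnn : ‖θ‖₊ = 1 := by ext; simpa using hθ
  -- key norm lemma
  have key : ∀ P : ℚ_[p][X], P.natDegree < n →
      ‖(aeval θ) P‖₊ = Finset.univ.sup (fun i : Fin n => ‖P.coeff (i : ℕ)‖₊) := by
    intro P hP
    rw [Polynomial.aeval_eq_sum_range' hP θ,
      ← Fin.sum_univ_eq_sum_range (fun i => P.coeff i • θ ^ i) n, H (fun i => P.coeff i)]
    refine Finset.sup_congr rfl fun i _ => ?_
    rw [nnnorm_smul, nnnorm_pow, hθnn, one_pow, mul_one]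
  -- degree of F
  have hint : IsIntegral ℚ_[p] θ := IsIntegral.of_finite _ _
  have hminn : (minpoly ℚ_[p] θ).natDegree = n := by
    rw [← IntermediateField.adjoin.finrank hint, hgen, IntermediateField.finrank_top', hn]
  have hFn : F.natDegree = n := by
    rw [← hFmonic.natDegree_map (algebraMap ℤ_[p] ℚ_[p]), hF, hminn]
  set Fbar := F.map (PadicInt.toZMod (p := p)) with hFbar
  have hFbm : Fbar.Monic := hFmonic.map _
  have hFbn : Fbar.natDegree = n := by rw [hFbar, hFmonic.natDegree_map, hFn]
  rw [irreducible_iff] at hred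
  push_neg at hred
  have hnotunit : ¬ IsUnit Fbar := fun h => hn0.ne' (hFbn ▸ natDegree_eq_zero_of_isUnit h)
  obtain ⟨a, b, hab, ha, hb⟩ := hred hnotunit
  have hFb0 : Fbar ≠ 0 := hFbm.ne_zero
  have ha0 : a ≠ 0 := by rintro rfl; simp at hab; exact hFb0 hab
  set u := a.leadingCoeff with hu
  have hu0 : u ≠ 0 := leadingCoeff_ne_zero.mpr ha0
  set a' := C u⁻¹ * a with ha'
  set b' := C u * b with hb'
  have ha'm : a'.Monic := by
    rw [Monic, ha', leadingCoeff_mul, leadingCoeff_C, inv_mul_cancel₀ hu0]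
  have hb'm : b'.Monic := by
    have h1 : u * b.leadingCoeff = 1 := by
      rw [hu, ← leadingCoeff_mul, ← hab]; exact hFbm
    rw [Monic, hb', leadingCoeff_mul, leadingCoeff_C, h1]
  have hab' : Fbar = a' * b' := by
    rw [ha', hb']
    calc Fbar = a * b := hab
    _ = (C u⁻¹ * C u) * (a * b) := by
        rw [← C_mul, inv_mul_cancel₀ hu0, C_1, one_mul]
    _ = C u⁻¹ * a * (C u * b) := by ring
  have hsum : a'.natDegree + b'.natDegree = n := by
    rw [← ha'm.natDegree_mul hb'm, ← hab', hFbn]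
  have hda : 0 < a'.natDegree := by
    rcases Nat.eq_zero_or_pos a'.natDegree with h | h
    · exfalso
      have : a' = 1 := ha'm.natDegree_eq_zero.mp h
      apply ha
      have : a = C u := by
        have := congrArg (fun q => C u * q) this
        simp only [mul_one] at this
        rw [← this, ha', ← mul_assoc, ← C_mul, mul_inv_cancel₀ hu0, C_1, one_mul]
      rw [this]
      exact isUnit_C.mpr hu0.isUnit
    · exact h
  have hdb : 0 < b'.natDegree := by
    rcases Nat.eq_zero_or_pos b'.natDegree with h | h
    · exfalso
      have h1 : b' = 1 := hb'm.natDegree_eq_zero.mp h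
      apply hb
      have : b = C u⁻¹ := by
        have := congrArg (fun q => C u⁻¹ * q) h1
        simp only [mul_one] at this
        rw [← this, hb', ← mul_assoc, ← C_mul, inv_mul_cancel₀ hu0, C_1, one_mul]
      rw [this]
      exact isUnit_C.mpr (inv_ne_zero hu0).isUnit
    · exact h
  -- lift a' and b'
  have hsurj : Function.Surjective (PadicInt.toZMod (p := p)) := by
    intro x
    exact ⟨(x.val : ℤ_[p]), by rw [map_natCast, ZMod.natCast_val, ZMod.cast_id]⟩
  obtain ⟨G, hG1, hG2, hG3⟩ := lifts_and_natDegree_eq_and_monic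
    ((lifts_iff_coeff_lifts a').mpr fun i => hsurj _) ha'm
  obtain ⟨Hq, hH1, hH2, hH3⟩ := lifts_and_natDegree_eq_and_monic
    ((lifts_iff_coeff_lifts b').mpr fun i => hsurj _) hb'm
  set D := G * Hq - F with hD
  have hGHm : (G * Hq).Monic := hG3.mul hH3
  have hGHn : (G * Hq).natDegree = n := by rw [hG3.natDegree_mul hH3, hG2, hH2, hsum]
  have hDmap : D.map (PadicInt.toZMod (p := p)) = 0 := by
    rw [hD, Polynomial.map_sub, Polynomial.map_mul, hG1, hH1, ← hab', hFbar, sub_self]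
  have hdvd : ∀ i : ℕ, (p : ℤ_[p]) ∣ D.coeff i := by
    intro i
    have : (PadicInt.toZMod (p := p)) (D.coeff i) = 0 := by
      rw [← Polynomial.coeff_map, hDmap, Polynomial.coeff_zero]
    have := RingHom.mem_ker.mpr this
    rw [PadicInt.ker_toZMod, PadicInt.maximalIdeal_eq_span_p, Ideal.mem_span_singleton] at this
    exact this
  have hDlt : D.natDegree < n := by
    rcases eq_or_ne D 0 with h | h
    · rw [h, natDegree_zero]; exact hn0
    · rw [natDegree_lt_iff_degree_lt h]
      have hdeg : (G * Hq).degree = F.degree := by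
        rw [degree_eq_natDegree hGHm.ne_zero, degree_eq_natDegree hFmonic.ne_zero, hGHn, hFn]
      have := degree_sub_lt hdeg hGHm.ne_zero (by rw [hGHm.leadingCoeff, hFmonic.leadingCoeff])
      rw [← hD] at this
      rwa [degree_eq_natDegree hGHm.ne_zero, hGHn] at this
  -- norms of G and Hq evaluated at θ
  have normeval : ∀ Q : ℤ_[p][X], Q.Monic → Q.natDegree < n →
      ‖(aeval θ) (Q.map (algebraMap ℤ_[p] ℚ_[p]))‖₊ = 1 := by
    intro Q hQm hQn
    rw [key _ (lt_of_le_of_lt (natDegree_map_le) hQn)]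
    apply le_antisymm
    · apply Finset.sup_le
      intro i _
      rw [coeff_map, PadicInt.algebraMap_apply]
      have : ‖((Q.coeff (i : ℕ) : ℤ_[p]) : ℚ_[p])‖ ≤ 1 := by
        rw [← PadicInt.norm_def]; exact PadicInt.norm_le_one _
      exact this
    · refine le_trans (le_of_eq ?_) (Finset.le_sup (Finset.mem_univ ⟨Q.natDegree, hQn⟩))
      rw [coeff_map, PadicInt.algebraMap_apply]
      simp only [hQm.coeff_natDegree]
      norm_num
  have hGlt : G.natDegree < n := by rw [hG2]; omega
  have hHlt : Hq.natDegree < n := by rw [hH2]; omega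
  have hGn := normeval G hG3 hGlt
  have hHn := normeval Hq hH3 hHlt
  have hprod : (aeval θ) ((G * Hq).map (algebraMap ℤ_[p] ℚ_[p]))
      = (aeval θ) (D.map (algebraMap ℤ_[p] ℚ_[p])) := by
    have hGH : G * Hq = D + F := by rw [hD]; ring
    rw [hGH, Polynomial.map_add, map_add, hF, minpoly.aeval, add_zero]
  have h1 : ‖(aeval θ) ((G * Hq).map (algebraMap ℤ_[p] ℚ_[p]))‖₊ = 1 := by
    rw [Polynomial.map_mul, map_mul, nnnorm_mul, hGn, hHn, mul_one]
  have h2 : ‖(aeval θ) (D.map (algebraMap ℤ_[p] ℚ_[p]))‖₊ ≤ ‖((p : ℤ_[p]) : ℚ_[p])‖₊ := by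
    rw [key _ (lt_of_le_of_lt (natDegree_map_le) hDlt)]
    apply Finset.sup_le
    intro i _
    rw [coeff_map, PadicInt.algebraMap_apply]
    obtain ⟨c, hc⟩ := hdvd (i : ℕ)
    rw [hc]
    push_cast
    rw [nnnorm_mul]
    have : ‖((c : ℤ_[p]) : ℚ_[p])‖₊ ≤ 1 := by
      have : ‖((c : ℤ_[p]) : ℚ_[p])‖ ≤ 1 := by
        rw [← PadicInt.norm_def]; exact PadicInt.norm_le_one _
      exact this
    calc ‖((p : ℤ_[p]) : ℚ_[p])‖₊ * ‖((c : ℤ_[p]) : ℚ_[p])‖₊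
        ≤ ‖((p : ℤ_[p]) : ℚ_[p])‖₊ * 1 := by gcongr
      _ = ‖((p : ℤ_[p]) : ℚ_[p])‖₊ := mul_one _
  have hlt : ‖((p : ℤ_[p]) : ℚ_[p])‖₊ < 1 := by
    have : ‖((p : ℤ_[p]) : ℚ_[p])‖ < 1 := by
      push_cast
      exact Padic.norm_p_lt_one
    exact this
  rw [hprod, ] at h1
  rw [h1] at h2
  exact absurd (lt_of_le_of_lt h2 hlt) (lt_irrefl 1)
end

section
/- Let K be a finite extension of ℚ_p with residue degree f, and let L = L(α₁,…,α_m) be a ℤ_p-lattice in K (f ≤ m ≤ [K:ℚ_p]) whose basis α₁,…,α_m is orthogonal with exactly f vectors of maximal absolute value λ₁. Then for every t ∈ K with |t| = λ₁, the distance from t to L, i.e., inf over v ∈ L of |t − v|, is strictly less than λ₁. -/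
open Finset

private lemma ultra_sum_lt' {K : Type*} [NormedField K]
    (hna : ∀ x y : K, ‖x + y‖ ≤ max ‖x‖ ‖y‖) {ι : Type*} (s : Finset ι) (g : ι → K)
    {r : ℝ} (hr : 0 < r) (h : ∀ i ∈ s, ‖g i‖ < r) : ‖∑ i ∈ s, g i‖ < r := by
  induction s using Finset.cons_induction with
  | empty => simpa using hr
  | cons a s ha ih =>
    rw [Finset.sum_cons]
    exact lt_of_le_of_lt (hna _ _)
      (max_lt (h a (by simp)) (ih fun i hi => h i (by simp [hi])))

/-- Let K be a finite extension of ℚ_p with residue degree f (witnessed by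
elements s₁,…,s_f of norm 1 whose residues form an 𝔽_p-basis of the residue field), and
L = L(α₁,…,α_m) a lattice (f ≤ m ≤ [K:ℚ_p]) whose basis is orthogonal, all vectors of norm
≤ λ₁ and exactly f of them of maximal norm λ₁. Then for every t ∈ K with |t| = λ₁ the
distance from t to L is strictly less than λ₁. -/
theorem stmt10 {p : ℕ} [Fact p.Prime] {K : Type*} [NormedField K] [NormedAlgebra ℚ_[p] K]
    [FiniteDimensional ℚ_[p] K]
    (hna : ∀ x y : K, ‖x + y‖ ≤ max ‖x‖ ‖y‖)
    (hext : ∀ x : ℚ_[p], ‖algebraMap ℚ_[p] K x‖ = ‖x‖)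
    {f m : ℕ} (hf : 0 < f) (hfm : f ≤ m) (hmn : m ≤ Module.finrank ℚ_[p] K)
    (s : Fin f → K) (hs1 : ∀ i, ‖s i‖ = 1)
    (hsli : ∀ c : Fin f → ℤ, ‖∑ i, (c i : K) * s i‖ < 1 → ∀ i, (p : ℤ) ∣ c i)
    (hsspan : ∀ x : K, ‖x‖ ≤ 1 → ∃ c : Fin f → ℤ, ‖x - ∑ i, (c i : K) * s i‖ < 1)
    (α : Fin m → K) (hlin : LinearIndependent ℚ_[p] α)
    (horth : ∀ a : Fin m → ℚ_[p],
      ‖∑ i, a i • α i‖₊ = Finset.univ.sup fun i => ‖a i • α i‖₊)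
    (lam : ℝ) (hmax : ∀ i, ‖α i‖ ≤ lam)
    (hcard : (Finset.univ.filter fun i => ‖α i‖ = lam).card = f) :
    ∀ t : K, ‖t‖ = lam →
      ∃ a : Fin m → ℤ_[p], ‖t - ∑ i, (a i : ℚ_[p]) • α i‖ < lam := by
  intro t ht
  classical
  haveI : NeZero p := ⟨(Fact.out : p.Prime).ne_zero⟩
  -- basic cast/norm facts
  have hcastK : ∀ z : ℤ, ((z : K)) = algebraMap ℚ_[p] K (z : ℚ_[p]) := fun z =>
    (map_intCast (algebraMap ℚ_[p] K) z).symm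
  have hKle : ∀ z : ℤ, ‖(z : K)‖ ≤ 1 := by
    intro z; rw [hcastK, hext]; exact Padic.norm_int_le_one z
  have hKlt : ∀ z : ℤ, (p : ℤ) ∣ z → ‖(z : K)‖ < 1 := by
    intro z hz; rw [hcastK, hext]; exact (Padic.norm_intCast_lt_one_iff (k := z)).mpr hz
  have hterm : ∀ (z : ℤ) (x : K), ‖x‖ < 1 → ‖(z : K) * x‖ < 1 := by
    intro z x hx
    calc ‖(z : K) * x‖ = ‖(z : K)‖ * ‖x‖ := norm_mul _ _
      _ ≤ 1 * ‖x‖ := mul_le_mul_of_nonneg_right (hKle z) (norm_nonneg x)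
      _ = ‖x‖ := one_mul _
      _ < 1 := hx
  have hterm2 : ∀ (z : ℤ) (j : Fin f), (p : ℤ) ∣ z → ‖(z : K) * s j‖ < 1 := by
    intro z j hz; rw [norm_mul, hs1 j, mul_one]; exact hKlt z hz
  -- the maximal indices
  set S : Finset (Fin m) := Finset.univ.filter (fun i => ‖α i‖ = lam) with hSdef
  have hcard' : S.card = f := hcard
  let ε : Fin f ≃ {x // x ∈ S} := (Finset.equivFinOfCardEq hcard').symm
  let e : Fin f → Fin m := fun i => ((ε i : {x // x ∈ S}) : Fin m)
  have heS : ∀ i, e i ∈ S := fun i => (ε i).2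
  have henorm : ∀ i, ‖α (e i)‖ = lam := by
    intro i
    have h := heS i
    rw [hSdef, Finset.mem_filter] at h
    exact h.2
  have heinj : Function.Injective e := by
    intro i j hij
    exact ε.injective (Subtype.ext hij)
  -- positivity of lam
  have i0 : Fin f := ⟨0, hf⟩
  set u : K := α (e i0) with hu
  have hune : u ≠ 0 := hlin.ne_zero (e i0)
  have hunorm : ‖u‖ = lam := henorm i0
  have hlam : 0 < lam := hunorm ▸ norm_pos_iff.mpr hune
  -- residue data for β i := α (e i) / u and for t / u
  have hβle : ∀ i, ‖α (e i) / u‖ ≤ 1 := by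
    intro i; rw [norm_div, henorm i, hunorm, div_self hlam.ne']
  choose M hM using fun i => hsspan (α (e i) / u) (hβle i)
  obtain ⟨d, hd⟩ := hsspan (t / u) (by rw [norm_div, ht, hunorm, div_self hlam.ne'])
  -- swapping sums
  have hswap : ∀ c : Fin f → ℤ,
      ∑ j, ((∑ i, c i * M i j : ℤ) : K) * s j
        = ∑ i, (c i : K) * ∑ j, (M i j : K) * s j := by
    intro c
    push_cast [Finset.sum_mul]
    rw [Finset.sum_comm]
    simp [Finset.mul_sum, mul_assoc]
  -- evaluation / sum lemmas for coefficient functions supported on the maximal indices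
  have hAe : ∀ (c : Fin f → ℤ) (i : Fin f),
      (∑ i', if e i = e i' then ((c i' : ℚ_[p])) else 0) = (c i : ℚ_[p]) := by
    intro c i
    rw [Finset.sum_eq_single i]
    · simp
    · intro i' _ hne
      rw [if_neg (fun h => hne (heinj h).symm)]
    · simp
  have hAsum : ∀ c : Fin f → ℤ,
      ∑ k, (∑ i, if k = e i then ((c i : ℚ_[p])) else 0) • α k
        = ∑ i, (c i : K) * α (e i) := by
    intro c
    simp only [Finset.sum_smul]
    rw [Finset.sum_comm]
    refine Finset.sum_congr rfl fun i _ => ?_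
    rw [Finset.sum_eq_single (e i)]
    · rw [if_pos rfl, Algebra.smul_def, hcastK]
    · intro k _ hk
      rw [if_neg hk, zero_smul]
    · simp
  -- linear independence of the residues of the maximal α's
  have hind : ∀ c : Fin f → ℤ, ‖∑ i, (c i : K) * α (e i)‖ < lam → ∀ i, (p : ℤ) ∣ c i := by
    intro c hc i
    by_contra hdvd
    let A : Fin m → ℚ_[p] := fun k => ∑ i', if k = e i' then ((c i' : ℚ_[p])) else 0
    have h1 : ‖A (e i) • α (e i)‖₊ ≤ ‖∑ k, A k • α k‖₊ := by
      rw [horth A]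
      exact Finset.le_sup (f := fun k => ‖A k • α k‖₊) (Finset.mem_univ (e i))
    have h3 : ‖A (e i) • α (e i)‖ ≤ ‖∑ k, A k • α k‖ := h1
    have hnc : ‖((c i : ℤ) : ℚ_[p])‖ = 1 :=
      le_antisymm (Padic.norm_int_le_one _)
        (not_lt.mp (fun h => hdvd (Padic.norm_intCast_lt_one_iff.mp h)))
    have h4 : A (e i) = (c i : ℚ_[p]) := hAe c i
    have h5 : ∑ k, A k • α k = ∑ i', (c i' : K) * α (e i') := hAsum c
    rw [h4, h5, norm_smul, hnc, one_mul, henorm i] at h3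
    exact absurd hc (not_lt.mpr h3)
  -- key step : divisibility from congruences against the matrix M
  have hstep : ∀ c : Fin f → ℤ, (∀ j, (p : ℤ) ∣ ∑ i, c i * M i j) → ∀ i, (p : ℤ) ∣ c i := by
    intro c hc
    apply hind c
    have hdecomp : ∑ i, (c i : K) * (α (e i) / u)
        = (∑ i, (c i : K) * ((α (e i) / u) - ∑ j, (M i j : K) * s j))
          + ∑ j, ((∑ i, c i * M i j : ℤ) : K) * s j := by
      rw [hswap c]
      simp only [mul_sub, Finset.sum_sub_distrib]
      try abel
    have h1 : ‖∑ i, (c i : K) * (α (e i) / u)‖ < 1 := by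
      rw [hdecomp]
      refine lt_of_le_of_lt (hna _ _) (max_lt ?_ ?_)
      · exact ultra_sum_lt' hna _ _ one_pos fun i _ => hterm _ _ (hM i)
      · exact ultra_sum_lt' hna _ _ one_pos fun j _ => hterm2 _ j (hc j)
    have h2 : ∑ i, (c i : K) * α (e i) = u * ∑ i, (c i : K) * (α (e i) / u) := by
      rw [Finset.mul_sum]
      refine Finset.sum_congr rfl fun i _ => ?_
      field_simp
    rw [h2, norm_mul, hunorm]
    calc lam * ‖∑ i, (c i : K) * (α (e i) / u)‖ < lam * 1 :=
          mul_lt_mul_of_pos_left h1 hlam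
      _ = lam := mul_one lam
  -- the mod-p matrix is invertible: solve for the residue of t/u
  have hvalcast : ∀ a : ZMod p, (((a.val : ℤ)) : ZMod p) = a := by
    intro a; push_cast [ZMod.natCast_val]; simp [ZMod.cast_id]
  have hFzero : ∀ c : Fin f → ZMod p,
      (∀ j, ∑ i, c i * (M i j : ZMod p) = 0) → c = 0 := by
    intro c hc
    have hdvdall : ∀ i, (p : ℤ) ∣ (((c i).val : ℤ)) := by
      apply hstep
      intro j
      have h0 : ((∑ i, ((c i).val : ℤ) * M i j : ℤ) : ZMod p) = 0 := by
        calc ((∑ i, ((c i).val : ℤ) * M i j : ℤ) : ZMod p)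
            = ∑ i, ((((c i).val : ℤ)) : ZMod p) * ((M i j : ℤ) : ZMod p) := by
              simp only [Int.cast_sum, Int.cast_mul]
          _ = ∑ i, c i * (M i j : ZMod p) :=
              Finset.sum_congr rfl fun i _ => by rw [hvalcast (c i)]
          _ = 0 := hc j
      exact (ZMod.intCast_zmod_eq_zero_iff_dvd _ p).mp h0
    funext i
    have h1 := (ZMod.intCast_zmod_eq_zero_iff_dvd (((c i).val : ℤ)) p).mpr (hdvdall i)
    rw [hvalcast (c i)] at h1
    simpa using h1
  let F : (Fin f → ZMod p) → (Fin f → ZMod p) := fun c j => ∑ i, c i * (M i j : ZMod p)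
  have hFinj : Function.Injective F := by
    intro a b hab
    have h0 : a - b = 0 := by
      apply hFzero
      intro j
      have h1 : F a j = F b j := congrFun hab j
      simp only [F] at h1
      simp only [Pi.sub_apply, sub_mul, Finset.sum_sub_distrib, h1, sub_self]
    funext i
    have h2 := congrFun h0 i
    simpa [sub_eq_zero] using h2
  have hFsurj : Function.Surjective F := Finite.injective_iff_surjective.mp hFinj
  obtain ⟨cb, hcb⟩ := hFsurj (fun j => ((d j : ℤ) : ZMod p))
  set c : Fin f → ℤ := fun i => ((cb i).val : ℤ) with hcdef
  have hcong : ∀ j, (p : ℤ) ∣ (d j - ∑ i, c i * M i j) := by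
    intro j
    apply (ZMod.intCast_zmod_eq_zero_iff_dvd _ p).mp
    have h3 : ∑ i, ((c i : ZMod p)) * ((M i j : ℤ) : ZMod p) = F cb j :=
      Finset.sum_congr rfl fun i _ => by
        show ((((cb i).val : ℤ)) : ZMod p) * _ = cb i * _
        rw [hvalcast (cb i)]
    simp only [Int.cast_sub, Int.cast_sum, Int.cast_mul]
    rw [h3, congrFun hcb j, sub_self]
  -- assemble : the residue of t/u is matched
  have hclose : ‖t / u - ∑ i, (c i : K) * (α (e i) / u)‖ < 1 := by
    have h1 : ∑ j, ((d j - ∑ i, c i * M i j : ℤ) : K) * s j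
        = ∑ j, (d j : K) * s j - ∑ i, (c i : K) * ∑ j, (M i j : K) * s j := by
      rw [← hswap c]
      simp only [Int.cast_sub, sub_mul, Finset.sum_sub_distrib]
    have h2 : ∑ i, (c i : K) * ((∑ j, (M i j : K) * s j) - α (e i) / u)
        = (∑ i, (c i : K) * ∑ j, (M i j : K) * s j) - ∑ i, (c i : K) * (α (e i) / u) := by
      simp only [mul_sub, Finset.sum_sub_distrib]
    have hdecomp : t / u - ∑ i, (c i : K) * (α (e i) / u)
        = (t / u - ∑ j, (d j : K) * s j)
          + ((∑ j, ((d j - ∑ i, c i * M i j : ℤ) : K) * s j)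
             + ∑ i, (c i : K) * ((∑ j, (M i j : K) * s j) - α (e i) / u)) := by
      rw [h1, h2]; abel
    rw [hdecomp]
    refine lt_of_le_of_lt (hna _ _) (max_lt hd (lt_of_le_of_lt (hna _ _) (max_lt ?_ ?_)))
    · exact ultra_sum_lt' hna _ _ one_pos fun j _ => hterm2 _ j (hcong j)
    · refine ultra_sum_lt' hna _ _ one_pos fun i _ => hterm _ _ ?_
      rw [norm_sub_rev]
      exact hM i
  -- conclude
  refine ⟨fun k => ∑ i, if k = e i then ((c i : ℤ_[p])) else 0, ?_⟩
  have hcoe : ∀ k, ((∑ i, if k = e i then ((c i : ℤ_[p])) else 0 : ℤ_[p]) : ℚ_[p])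
      = ∑ i, if k = e i then ((c i : ℚ_[p])) else 0 := by
    intro k
    calc ((∑ i, if k = e i then ((c i : ℤ_[p])) else 0 : ℤ_[p]) : ℚ_[p])
        = ∑ i, (((if k = e i then ((c i : ℤ_[p])) else 0 : ℤ_[p])) : ℚ_[p]) :=
          map_sum (PadicInt.Coe.ringHom) _ Finset.univ
      _ = ∑ i, if k = e i then ((c i : ℚ_[p])) else 0 :=
          Finset.sum_congr rfl fun i _ => by by_cases h : k = e i <;> simp [h]
  have hsum2 : ∑ k, ((∑ i, if k = e i then ((c i : ℤ_[p])) else 0 : ℤ_[p]) : ℚ_[p]) • α k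
      = ∑ i, (c i : K) * α (e i) := by
    calc ∑ k, ((∑ i, if k = e i then ((c i : ℤ_[p])) else 0 : ℤ_[p]) : ℚ_[p]) • α k
        = ∑ k, (∑ i, if k = e i then ((c i : ℚ_[p])) else 0) • α k := by
          refine Finset.sum_congr rfl fun k _ => ?_
          rw [hcoe k]
      _ = ∑ i, (c i : K) * α (e i) := hAsum c
  rw [hsum2]
  have hfinal : t - ∑ i, (c i : K) * α (e i)
      = u * (t / u - ∑ i, (c i : K) * (α (e i) / u)) := by
    rw [mul_sub, Finset.mul_sum]
    congr 1
    · field_simp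
    · refine Finset.sum_congr rfl fun i _ => ?_
      field_simp
  rw [hfinal, norm_mul, hunorm]
  calc lam * ‖t / u - ∑ i, (c i : K) * (α (e i) / u)‖ < lam * 1 :=
        mul_lt_mul_of_pos_left hclose hlam
    _ = lam := mul_one lam
end

section
/- Let K be a totally ramified finite extension of ℚ_p and L = L(α₁,…,α_m) a full-rank ℤ_p-lattice in K with orthogonal basis. Then for every t ∈ K with |t| equal to the maximal absolute value λ₁ among the basis vectors (where exactly one basis vector has absolute value λ₁), the distance from t to L is strictly less than λ₁. -/
/-- Let K be a totally ramified finite extension of ℚ_p (residue degree 1: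
every element of norm ≤ 1 is congruent to a rational integer modulo the maximal ideal) and
L a full-rank lattice with orthogonal basis α₁,…,α_m, all of norm ≤ λ₁ with exactly one
of norm λ₁. Then for every t with |t| = λ₁, the distance from t to L is < λ₁. -/
theorem stmt11 {p : ℕ} [Fact p.Prime] {K : Type*} [NormedField K] [NormedAlgebra ℚ_[p] K]
    [FiniteDimensional ℚ_[p] K]
    (hna : ∀ x y : K, ‖x + y‖ ≤ max ‖x‖ ‖y‖)
    (hext : ∀ x : ℚ_[p], ‖algebraMap ℚ_[p] K x‖ = ‖x‖)
    (htotram : ∀ x : K, ‖x‖ ≤ 1 → ∃ c : ℤ, ‖x - (c : K)‖ < 1)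
    {m : ℕ} (hm : m = Module.finrank ℚ_[p] K)
    (α : Fin m → K) (hlin : LinearIndependent ℚ_[p] α)
    (horth : ∀ a : Fin m → ℚ_[p],
      ‖∑ i, a i • α i‖₊ = Finset.univ.sup fun i => ‖a i • α i‖₊)
    (lam : ℝ) (hmax : ∀ i, ‖α i‖ ≤ lam)
    (hcard : (Finset.univ.filter fun i => ‖α i‖ = lam).card = 1) :
    ∀ t : K, ‖t‖ = lam →
      ∃ a : Fin m → ℤ_[p], ‖t - ∑ i, (a i : ℚ_[p]) • α i‖ < lam := by
  intro t ht
  -- extract the unique index of norm lam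
  have hne : (Finset.univ.filter fun i => ‖α i‖ = lam).Nonempty := by
    rw [← Finset.card_pos, hcard]; norm_num
  obtain ⟨i₀, hi₀⟩ := hne
  have hα : ‖α i₀‖ = lam := (Finset.mem_filter.mp hi₀).2
  have hα0 : α i₀ ≠ 0 := by
    intro h
    exact hlin.ne_zero i₀ h
  have hlam0 : 0 < lam := hα ▸ norm_pos_iff.mpr hα0
  have hu : ‖t / α i₀‖ ≤ 1 := by
    rw [norm_div, hα, ht, div_self hlam0.ne']
  obtain ⟨c, hc⟩ := htotram _ hu
  refine ⟨fun i => if i = i₀ then (c : ℤ_[p]) else 0, ?_⟩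
  have hsum : ∑ i, ((if i = i₀ then (c : ℤ_[p]) else 0 : ℤ_[p]) : ℚ_[p]) • α i
      = ((c : ℚ_[p]) : ℚ_[p]) • α i₀ := by
    rw [Finset.sum_eq_single i₀]
    · simp
    · intro b _ hb; simp [hb]
    · intro h; exact absurd (Finset.mem_univ i₀) h
  rw [hsum, Algebra.smul_def, map_intCast]
  have key : t - (c : K) * α i₀ = (t / α i₀ - (c : K)) * α i₀ := by
    field_simp
  rw [key, norm_mul, hα]
  calc ‖t / α i₀ - (c : K)‖ * lam < 1 * lam := by
        exact mul_lt_mul_of_pos_right hc hlam0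
    _ = lam := one_mul lam
end

section
/- Let q ≠ p be primes and θ a primitive q-th root of unity with [ℚ_p(θ) : ℚ_p] = f = q−1. Let G be an Eisenstein polynomial over ℤ_p with root π, and K = ℚ_p(θ, π). Let ζ = π + ∑_{i=0}^{f−1} aᵢθⁱ with a_{f−1} ∈ ℚ_p \ ℤ_p and aᵢ ∈ ℤ_p for 0 ≤ i ≤ f−2. Then K = ℚ_p(ζ). -/
open IntermediateField Polynomial

set_option maxHeartbeats 1000000
set_option synthInstance.maxHeartbeats 200000

private theorem stmt16_key {p q : ℕ} [Fact p.Prime] (hq : q.Prime) (hne : q ≠ p)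
    {K : Type*} [Field K] [Algebra ℚ_[p] K]
    (θ π : K) (hθ : IsPrimitiveRoot θ q)
    (G : Polynomial ℤ_[p]) (hGmonic : G.Monic)
    (hπ : Polynomial.aeval π (G.map (algebraMap ℤ_[p] ℚ_[p])) = 0)
    (hgen : ℚ_[p]⟮θ, π⟯ = ⊤)
    (a : Fin (q - 1) → ℚ_[p])
    (hints : ∀ i : Fin (q - 1), (i : ℕ) < q - 2 → ‖a i‖ ≤ 1)
    (hlast : 1 < ‖a ⟨q - 2, by have := hq.two_le; omega⟩‖)
    (ζ : K) (hζdef : ζ = π + ∑ i : Fin (q - 1), a i • θ ^ (i : ℕ))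
    (L : IntermediateField ℚ_[p] K) (hL : L = ℚ_[p]⟮ζ⟯)
    (Ω : Type*) [Field Ω] [Algebra L Ω] [Algebra ℚ_[p] Ω] [IsScalarTower ℚ_[p] L Ω]
    (σ τ : K →ₐ[L] Ω) : σ = τ := by
  have hq2 : 2 ≤ q := hq.two_le
  have hq0 : q ≠ 0 := hq.ne_zero
  haveI : NeZero q := ⟨hq0⟩
  haveI : Fact q.Prime := ⟨hq⟩
  letI : Algebra ℤ_[p] K := ((algebraMap ℚ_[p] K).comp (algebraMap ℤ_[p] ℚ_[p])).toAlgebra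
  haveI : IsScalarTower ℤ_[p] ℚ_[p] K := IsScalarTower.of_algebraMap_eq fun x => rfl
  letI : Algebra ℤ_[p] Ω := ((algebraMap ℚ_[p] Ω).comp (algebraMap ℤ_[p] ℚ_[p])).toAlgebra
  haveI : IsScalarTower ℤ_[p] ℚ_[p] Ω := IsScalarTower.of_algebraMap_eq fun x => rfl
  -- commutation with scalars
  have hcommQ : ∀ (σ : K →ₐ[L] Ω) (r : ℚ_[p]), σ (algebraMap ℚ_[p] K r) = algebraMap ℚ_[p] Ω r := by
    intro σ r
    rw [IsScalarTower.algebraMap_apply ℚ_[p] L K r, σ.commutes, ← IsScalarTower.algebraMap_apply]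
  have hcommZ : ∀ (σ : K →ₐ[L] Ω) (z : ℤ_[p]), σ (algebraMap ℤ_[p] K z) = algebraMap ℤ_[p] Ω z := by
    intro σ z
    rw [IsScalarTower.algebraMap_apply ℤ_[p] ℚ_[p] K, hcommQ, ← IsScalarTower.algebraMap_apply]
  -- integrality over ℤ_p
  have hθZ : IsIntegral ℤ_[p] θ := by
    refine ⟨X ^ q - C 1, monic_X_pow_sub_C 1 hq0, ?_⟩
    simp [eval₂, hθ.pow_eq_one]
  have hπZ : IsIntegral ℤ_[p] π := ⟨G, hGmonic, by
    rw [aeval_def] at hπ; rw [Polynomial.eval₂_map] at hπ; exact hπ⟩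
  have hmapint : ∀ (σ : K →ₐ[L] Ω) (x : K), IsIntegral ℤ_[p] x → IsIntegral ℤ_[p] (σ x) := by
    intro σ x hx
    exact IsIntegral.map (⟨σ.toRingHom, hcommZ σ⟩ : K →ₐ[ℤ_[p]] Ω) hx
  -- injectivity
  have hσinj : Function.Injective σ := σ.toRingHom.injective
  have hτinj : Function.Injective τ := τ.toRingHom.injective
  -- primitive roots in Ω
  set η : Ω := τ θ with hηdef
  have hη : IsPrimitiveRoot η q := hθ.map_of_injective hτinj
  have hXq : (σ θ) ^ q = 1 := by rw [← map_pow, hθ.pow_eq_one, map_one]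
  obtain ⟨c, hcq, hc⟩ := hη.eq_pow_of_pow_eq_one hXq
  have hc0 : c ≠ 0 := by
    rintro rfl
    have : IsPrimitiveRoot (σ θ) q := hθ.map_of_injective hσinj
    rw [← hc, pow_zero] at this
    have := this.dvd_of_pow_eq_one 1 (pow_one 1)
    exact absurd (Nat.le_of_dvd one_pos this) (by omega)
  -- σ and τ agree on ζ
  have hζL : ζ ∈ L := hL ▸ mem_adjoin_simple_self ℚ_[p] ζ
  have hστζ : σ ζ = τ ζ := by
    have h1 := σ.commutes ⟨ζ, hζL⟩
    have h2 := τ.commutes ⟨ζ, hζL⟩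
    have : algebraMap L K ⟨ζ, hζL⟩ = ζ := rfl
    rw [this] at h1 h2
    rw [h1, h2]
  have hexp : ∀ (σ : K →ₐ[L] Ω), σ ζ
      = σ π + ∑ i : Fin (q - 1), algebraMap ℚ_[p] Ω (a i) * (σ θ) ^ (i : ℕ) := by
    intro σ
    rw [hζdef, map_add, map_sum]
    congr 1
    refine Finset.sum_congr rfl fun i _ => ?_
    rw [Algebra.smul_def, map_mul, hcommQ σ, map_pow]
  have hE : σ π + ∑ i : Fin (q - 1), algebraMap ℚ_[p] Ω (a i) * (σ θ) ^ (i : ℕ)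
      = τ π + ∑ i : Fin (q - 1), algebraMap ℚ_[p] Ω (a i) * η ^ (i : ℕ) := by
    rw [← hexp σ, ← hexp τ, hστζ]
  -- the main dichotomy
  have hθeq : σ θ = τ θ := by
    by_contra hne'
    have hc1 : c ≠ 1 := by
      rintro rfl
      rw [pow_one] at hc
      exact hne' (hc.symm ▸ rfl)
    have hc2 : 2 ≤ c := by omega
    have hq3 : 3 ≤ q := by omega
    clear hne'
    haveI : CharZero Ω := charZero_of_injective_algebraMap (algebraMap ℚ_[p] Ω).injective
    have hp2 : 2 ≤ p := (Fact.out : p.Prime).two_le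
    set A := algebraMap ℚ_[p] Ω with hA
    set J : Fin (q - 1) := ⟨q - 2, by omega⟩ with hJ
    set X : Ω := σ θ with hX
    set δ : Ω := X ^ (q - 2) - η ^ (q - 2) with hδ
    have hlast' : 1 < ‖a J‖ := hlast
    have haJ : a J ≠ 0 := by
      intro h
      rw [h, norm_zero] at hlast'
      linarith
    have hsplit : ∀ Y : Ω, ∑ i : Fin (q - 1), A (a i) * Y ^ (i : ℕ)
        = A (a J) * Y ^ (q - 2) + ∑ i ∈ Finset.univ.erase J, A (a i) * Y ^ (i : ℕ) := by
      intro Y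
      rw [← Finset.add_sum_erase Finset.univ _ (Finset.mem_univ J)]
    have hErw : σ π + (A (a J) * X ^ (q - 2) + ∑ i ∈ Finset.univ.erase J, A (a i) * X ^ (i : ℕ))
        = τ π + (A (a J) * η ^ (q - 2) + ∑ i ∈ Finset.univ.erase J, A (a i) * η ^ (i : ℕ)) := by
      rw [← hsplit X, ← hsplit η]
      exact hE
    have hEE : A (a J) * δ
        = (τ π - σ π) + ∑ i ∈ Finset.univ.erase J, A (a i) * (η ^ (i : ℕ) - X ^ (i : ℕ)) := by
      have hsum : ∑ i ∈ Finset.univ.erase J, A (a i) * (η ^ (i : ℕ) - X ^ (i : ℕ))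
          = (∑ i ∈ Finset.univ.erase J, A (a i) * η ^ (i : ℕ))
            - ∑ i ∈ Finset.univ.erase J, A (a i) * X ^ (i : ℕ) := by
        rw [← Finset.sum_sub_distrib]
        exact Finset.sum_congr rfl fun i _ => by ring
      rw [hsum, hδ]
      linear_combination hErw
    have hηZ : IsIntegral ℤ_[p] η := hmapint τ θ hθZ
    have hXZ : IsIntegral ℤ_[p] X := hmapint σ θ hθZ
    have hRHSint : IsIntegral ℤ_[p] (A (a J) * δ) := by
      rw [hEE]
      refine IsIntegral.add ((hmapint τ π hπZ).sub (hmapint σ π hπZ)) ?_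
      have : ∀ i ∈ Finset.univ.erase J, (A (a i) * (η ^ (i : ℕ) - X ^ (i : ℕ)))
          ∈ integralClosure ℤ_[p] Ω := by
        intro i hi
        have hilt : (i : ℕ) < q - 2 := by
          have h1 : (i : ℕ) < q - 1 := i.isLt
          have h2 : (i : ℕ) ≠ q - 2 := fun h => (Finset.mem_erase.mp hi).1 (Fin.ext h)
          omega
        have hni : ‖a i‖ ≤ 1 := hints i hilt
        have hAai : A (a i) = algebraMap ℤ_[p] Ω ⟨a i, hni⟩ := by
          exact (IsScalarTower.algebraMap_apply ℤ_[p] ℚ_[p] Ω (⟨a i, hni⟩ : ℤ_[p])).symm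
        refine mul_mem ?_ (sub_mem ?_ ?_)
        · rw [hAai]
          exact Subalgebra.algebraMap_mem _ _
        · exact (hηZ.pow _)
        · exact (hXZ.pow _)
      exact (mem_integralClosure_iff ℤ_[p] Ω).mp (Subalgebra.sum_mem _ this)
    -- the ring of integers and a maximal ideal containing p
    set R := integralClosure ℤ_[p] Ω with hR
    have hpnu : ¬ IsUnit ((p : ℕ) : R) := by
      intro hu
      obtain ⟨u, hu⟩ := hu
      have hval : ((u⁻¹ : Rˣ) : R) * ((p : ℕ) : R) = 1 := by
        rw [← hu, Units.inv_mul]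
      have hΩ : (((u⁻¹ : Rˣ) : R) : Ω) * ((p : ℕ) : Ω) = 1 := by
        have := congrArg (Subtype.val) hval
        push_cast at this
        exact_mod_cast this
      have hpne : ((p : ℕ) : Ω) ≠ 0 := by
        exact_mod_cast Nat.cast_ne_zero.mpr (by omega)
      have hvinv : (((u⁻¹ : Rˣ) : R) : Ω) = ((p : ℕ) : Ω)⁻¹ :=
        eq_inv_of_mul_eq_one_left (by rw [mul_comm] at hΩ; rw [mul_comm]; exact hΩ)
      have hint : IsIntegral ℤ_[p] (((p : ℕ) : Ω)⁻¹) := hvinv ▸ ((u⁻¹ : Rˣ) : R).2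
      have hform : ((p : ℕ) : Ω)⁻¹ = algebraMap ℚ_[p] Ω (((p : ℕ) : ℚ_[p])⁻¹) := by
        rw [map_inv₀, map_natCast]
      rw [hform] at hint
      have hiff := isIntegral_algHom_iff (IsScalarTower.toAlgHom ℤ_[p] ℚ_[p] Ω)
        (algebraMap ℚ_[p] Ω).injective (x := (((p : ℕ) : ℚ_[p]))⁻¹)
      rw [IsScalarTower.coe_toAlgHom'] at hiff
      obtain ⟨y, hy⟩ := IsIntegrallyClosed.isIntegral_iff.mp (hiff.mp hint)
      have hy1 : ‖(y : ℚ_[p])‖ ≤ 1 := y.2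
      rw [PadicInt.algebraMap_apply] at hy
      rw [hy, norm_inv, Padic.norm_p, inv_inv] at hy1
      have : (2 : ℝ) ≤ (p : ℝ) := by exact_mod_cast hp2
      linarith
    have hspan : Ideal.span {((p : ℕ) : R)} ≠ ⊤ := by
      rw [Ne, Ideal.span_singleton_eq_top]
      exact hpnu
    obtain ⟨m, hmmax, hmle⟩ := Ideal.exists_le_maximal _ hspan
    have hpm : ((p : ℕ) : R) ∈ m := hmle (Ideal.subset_span rfl)
    -- δ lies in m
    have hδZ : IsIntegral ℤ_[p] δ := (hXZ.pow _).sub (hηZ.pow _)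
    have hbnorm : ‖(a J)⁻¹ * ((p : ℕ) : ℚ_[p])⁻¹‖ ≤ 1 := by
      have h1 : ‖(a J)⁻¹‖ < 1 := by
        rw [norm_inv]
        exact inv_lt_one_of_one_lt₀ hlast'
      have h2 : ‖(a J)⁻¹‖ ≤ (p : ℝ) ^ (-1 : ℤ) := by
        rw [Padic.norm_le_pow_iff_norm_lt_pow_add_one]
        simpa using h1
      have h3 : ‖((p : ℕ) : ℚ_[p])⁻¹‖ = (p : ℝ) := by
        rw [norm_inv, Padic.norm_p, inv_inv]
      rw [norm_mul, h3]
      have hppos : (0 : ℝ) < (p : ℝ) := by positivity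
      calc ‖(a J)⁻¹‖ * (p : ℝ) ≤ (p : ℝ) ^ (-1 : ℤ) * (p : ℝ) := by
            apply mul_le_mul_of_nonneg_right h2 (le_of_lt hppos)
        _ = 1 := by
            rw [zpow_neg_one]
            field_simp
    set b : ℤ_[p] := ⟨(a J)⁻¹ * ((p : ℕ) : ℚ_[p])⁻¹, hbnorm⟩ with hb
    have hsint : IsIntegral ℤ_[p] (algebraMap ℤ_[p] Ω b * (A (a J) * δ)) :=
      (isIntegral_algebraMap).mul hRHSint
    have hdm : (⟨δ, hδZ⟩ : R) ∈ m := by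
      have hfact : (⟨δ, hδZ⟩ : R) = ((p : ℕ) : R) * ⟨_, hsint⟩ := by
        apply Subtype.ext
        push_cast
        rw [IsScalarTower.algebraMap_apply ℤ_[p] ℚ_[p] Ω, PadicInt.algebraMap_apply]
        show δ = ((p : ℕ) : Ω) * (A ((a J)⁻¹ * ((p : ℕ) : ℚ_[p])⁻¹) * (A (a J) * δ))
        have hAp : ((p : ℕ) : Ω) = A ((p : ℕ) : ℚ_[p]) := by rw [map_natCast]
        rw [hAp, map_mul, map_inv₀, map_inv₀]
        have hA1 : A (a J) ≠ 0 := by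
          simpa using haJ
        have hA2 : A ((p : ℕ) : ℚ_[p]) ≠ 0 := by
          rw [map_natCast]
          exact_mod_cast Nat.cast_ne_zero.mpr (by omega)
        field_simp
      rw [hfact]
      exact Ideal.mul_mem_right _ _ hpm
    -- pass to the residue field
    haveI := hmmax
    letI : Field (R ⧸ m) := Ideal.Quotient.field m
    set φ := Ideal.Quotient.mk m with hφ
    set eR : R := ⟨η, hηZ⟩ with heR
    set e : R ⧸ m := φ eR with he
    have heRq : eR ^ q = 1 := by
      apply Subtype.ext
      push_cast
      exact hη.pow_eq_one
    have heq : e ^ q = 1 := by rw [he, ← map_pow, heRq, map_one]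
    have hsum0 : (∑ i ∈ Finset.range q, eR ^ i) = 0 := by
      apply Subtype.ext
      push_cast
      exact hη.geom_sum_eq_zero (by omega)
    have he1 : e ≠ 1 := by
      intro h1
      have hq0F : ((q : ℕ) : R ⧸ m) = 0 := by
        have := congrArg φ hsum0
        rw [map_sum, map_zero] at this
        simp only [map_pow] at this
        rw [← he] at this
        rw [h1] at this
        simpa using this
      have hp0F : ((p : ℕ) : R ⧸ m) = 0 := by
        have h0 : φ ((p : ℕ) : R) = 0 := Ideal.Quotient.eq_zero_iff_mem.mpr hpm
        have h1 : ((p : ℕ) : R ⧸ m) = φ ((p : ℕ) : R) := (map_natCast φ p).symm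
        rw [h1, h0]
      have hco : Nat.gcd q p = 1 := (Nat.coprime_primes hq (Fact.out)).mpr hne
      have hgcd := Nat.gcd_eq_gcd_ab q p
      have hcast : ((Nat.gcd q p : ℤ) : R ⧸ m)
          = ((q : ℤ) : R ⧸ m) * ((Nat.gcdA q p : ℤ) : R ⧸ m)
            + ((p : ℤ) : R ⧸ m) * ((Nat.gcdB q p : ℤ) : R ⧸ m) := by
        exact_mod_cast congrArg (fun z : ℤ => (z : R ⧸ m)) hgcd
      rw [hco] at hcast
      push_cast at hcast
      rw [hq0F, hp0F] at hcast
      simp at hcast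
    have horder : orderOf e = q := orderOf_eq_prime heq he1
    have he0 : e ≠ 0 := by
      intro h0
      rw [h0, zero_pow hq0] at heq
      exact zero_ne_one heq
    -- evaluate δ in the residue field
    have hdR : (⟨δ, hδZ⟩ : R) = eR ^ (c * (q - 2)) - eR ^ (q - 2) := by
      have hδη : δ = η ^ (c * (q - 2)) - η ^ (q - 2) := by
        rw [hδ, ← hc, ← pow_mul]
      apply Subtype.ext
      push_cast
      exact hδη
    have hφd : e ^ (c * (q - 2)) - e ^ (q - 2) = 0 := by
      have := Ideal.Quotient.eq_zero_iff_mem.mpr hdm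
      rw [hdR, map_sub, map_pow, map_pow, ← he] at this
      exact this
    have hpoweq : e ^ (c * (q - 2)) = e ^ (q - 2) := by
      have := sub_eq_zero.mp hφd
      exact this
    have hcsplit : c * (q - 2) = (q - 2) + (c - 1) * (q - 2) := by
      obtain ⟨k, rfl⟩ : ∃ k, c = k + 1 := ⟨c - 1, by omega⟩
      rw [Nat.add_sub_cancel]
      ring
    have hpow1 : e ^ ((c - 1) * (q - 2)) = 1 := by
      rw [hcsplit, pow_add] at hpoweq
      have := mul_left_cancel₀ (pow_ne_zero (q - 2) he0) (hpoweq.trans (mul_one _).symm)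
      exact this
    have hdvd : q ∣ (c - 1) * (q - 2) := by
      have hd := orderOf_dvd_of_pow_eq_one hpow1
      rwa [horder] at hd
    rcases (Nat.Prime.dvd_mul hq).mp hdvd with h | h
    · have := Nat.le_of_dvd (by omega) h
      omega
    · have := Nat.le_of_dvd (by omega) h
      omega
  -- from hθeq conclude σ π = τ π and then σ = τ
  have hπeq : σ π = τ π := by
    rw [hθeq] at hE
    exact add_right_cancel hE
  -- finish via adjoin induction
  have hxadj : ∀ x : K, x ∈ Algebra.adjoin ℚ_[p] ({θ, π} : Set K) := by
    intro x
    have halg : ∀ y ∈ ({θ, π} : Set K), IsAlgebraic ℚ_[p] y := by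
      rintro y (rfl | rfl)
      · exact (hθZ.tower_top (A := ℚ_[p])).isAlgebraic
      · exact (hπZ.tower_top (A := ℚ_[p])).isAlgebraic
    have h1 := IntermediateField.adjoin_toSubalgebra_of_isAlgebraic halg
    have : x ∈ (ℚ_[p]⟮θ, π⟯ : IntermediateField ℚ_[p] K).toSubalgebra := by
      rw [hgen]; trivial
    rwa [h1] at this
  apply AlgHom.ext
  intro x
  refine Algebra.adjoin_induction ?_ ?_ ?_ ?_ (hxadj x)
  · rintro y (rfl | rfl)
    · exact hθeq
    · exact hπeq
  · intro r
    rw [hcommQ σ, hcommQ τ]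
  · intro u v _ _ hu hv
    rw [map_add, map_add, hu, hv]
  · intro u v _ _ hu hv
    rw [map_mul, map_mul, hu, hv]


/-- Let q ≠ p be primes, θ a primitive q-th root of unity with
[ℚ_p(θ) : ℚ_p] = q - 1 =: f, G an Eisenstein polynomial over ℤ_p with root π, and
K = ℚ_p(θ, π). If ζ = π + ∑_{i=0}^{f-1} aᵢ θ^i with aᵢ ∈ ℤ_p for i ≤ f-2 and
a_{f-1} ∈ ℚ_p \ ℤ_p (i.e. ‖a_{f-1}‖ > 1), then K = ℚ_p(ζ). -/
theorem stmt16 {p q : ℕ} [Fact p.Prime] (hq : q.Prime) (hne : q ≠ p)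
    {K : Type*} [Field K] [Algebra ℚ_[p] K]
    (θ π : K) (hθ : IsPrimitiveRoot θ q)
    (hθdeg : Module.finrank ℚ_[p] ℚ_[p]⟮θ⟯ = q - 1)
    (G : Polynomial ℤ_[p]) (hGmonic : G.Monic)
    (hGeis : G.IsEisensteinAt (Ideal.span {(p : ℤ_[p])}))
    (hπ : Polynomial.aeval π (G.map (algebraMap ℤ_[p] ℚ_[p])) = 0)
    (hgen : ℚ_[p]⟮θ, π⟯ = ⊤)
    (a : Fin (q - 1) → ℚ_[p])
    (hints : ∀ i : Fin (q - 1), (i : ℕ) < q - 2 → ‖a i‖ ≤ 1)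
    (hlast : 1 < ‖a ⟨q - 2, by have := hq.two_le; omega⟩‖) :
    ℚ_[p]⟮π + ∑ i : Fin (q - 1), a i • θ ^ (i : ℕ)⟯ = ⊤ := by
  have hq2 : 2 ≤ q := hq.two_le
  have hq0 : q ≠ 0 := hq.ne_zero
  set ζ : K := π + ∑ i : Fin (q - 1), a i • θ ^ (i : ℕ) with hζdef
  -- basic integrality
  have hθint : IsIntegral ℚ_[p] θ := by
    refine ⟨X ^ q - C 1, monic_X_pow_sub_C 1 hq0, ?_⟩
    simp [eval₂, hθ.pow_eq_one]
  have hπint : IsIntegral ℚ_[p] π := ⟨G.map (algebraMap ℤ_[p] ℚ_[p]), hGmonic.map _, hπ⟩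
  haveI : FiniteDimensional ℚ_[p] (ℚ_[p]⟮θ, π⟯ : IntermediateField ℚ_[p] K) := by
    apply IntermediateField.finiteDimensional_adjoin
    rintro x hx
    rcases hx with rfl | hx
    · exact hθint
    · rcases hx with rfl | h
      · exact hπint
  haveI : FiniteDimensional ℚ_[p] K := by
    rw [hgen] at this
    exact Module.Finite.equiv IntermediateField.topEquiv.toLinearEquiv
  haveI : CharZero K := charZero_of_injective_algebraMap (algebraMap ℚ_[p] K).injective
  set L := ℚ_[p]⟮ζ⟯ with hL
  haveI : FiniteDimensional L K := FiniteDimensional.right ℚ_[p] L K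
  set Ω := AlgebraicClosure L with hΩ
  have key : ∀ σ τ : K →ₐ[L] Ω, σ = τ := fun σ τ =>
    stmt16_key hq hne θ π hθ G hGmonic hπ hgen a hints hlast ζ hζdef L hL Ω σ τ
  haveI : Subsingleton (K →ₐ[L] Ω) := ⟨key⟩
  have hcard : Fintype.card (K →ₐ[L] Ω) = Module.finrank L K := AlgHom.card L K Ω
  have h1 : Module.finrank L K = 1 := by
    have := Fintype.card_le_one_iff_subsingleton.mpr ‹Subsingleton (K →ₐ[L] Ω)›
    have h0 : 0 < Module.finrank L K := Module.finrank_pos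
    omega
  have hbot : (⊥ : Subalgebra L K) = ⊤ := Subalgebra.bot_eq_top_of_finrank_eq_one h1
  rw [eq_top_iff]
  rintro x -
  have hx : x ∈ (⊥ : Subalgebra L K) := by rw [hbot]; trivial
  obtain ⟨y, hy⟩ := Algebra.mem_bot.mp hx
  exact hy ▸ y.2
end
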